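/- arXiv:1608.02902 — 4 statements merged into one kernel-verified Lean document; each statement's English description precedes it below -/
import Mathlib

section
/- Let π be a permutation on k ≥ 3 objects with no fixed points (i.e., the Hamming distance between π and the identity is k). Then the vertex set [k] of the incidence graph G_π can be partitioned into three sets V₁, V₂, V₃ such that each V_i is an independent set in G_π and |V_i| ≥ ⌊k/3⌋ for each i. -/
/-- The incidence graph of a permutation `π` on `[k]`: vertices `i ≠ j` are adjacent
iff `j = π i` or `i = π j`. -/
def incidenceGraph {k : ℕ} (π : Equiv.Perm (Fin k)) : SimpleGraph (Fin k) where
  Adj i j := i ≠ j ∧ (j = π i ∨ i = π j)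
  symm := by
    constructor
    intro i j h
    rcases h with ⟨hne, hor⟩
    exact ⟨hne.symm, hor.symm⟩
  loopless := by constructor; intro i h; exact h.1 rfl

/-!
Colour the vertices cycle by cycle, running through the residues 0, 1, 2, 0, 1, 2, … mod 3 and
continuing from one cycle where the previous one stopped. The colour classes then have exactly
the sizes of the residue classes mod 3 in {0, …, k - 1}, each at least ⌊k/3⌋. Since π has no
fixed points every cycle has length ℓ ≥ 2, so consecutive vertices of a cycle get different
colours; the one clash, between the last and the first vertex of a cycle with ℓ ≡ 1 (mod 3), is
removed by swapping the colours of its last two vertices.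
-/

open Finset Function

def cycleReorder (ℓ : ℕ) : Equiv.Perm ℕ :=
  if ℓ % 3 = 1 then Equiv.swap (ℓ - 2) (ℓ - 1) else 1

/-- The colour of position `j` on a cycle of length `ℓ`, when `m` vertices were coloured before. -/
def cycleColor (m ℓ j : ℕ) : ZMod 3 := ((m + cycleReorder ℓ j : ℕ) : ZMod 3)

lemma cycleReorder_lt_iff (ℓ j : ℕ) : cycleReorder ℓ j < ℓ ↔ j < ℓ := by
  unfold cycleReorder
  split_ifs
  · rw [Equiv.swap_apply_def]; split_ifs <;> omega
  · simp

lemma cycleColor_mod_succ_ne {m ℓ j : ℕ} (hℓ : 2 ≤ ℓ) (hj : j < ℓ) :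
    cycleColor m ℓ ((j + 1) % ℓ) ≠ cycleColor m ℓ j := by
  have hsucc : (j + 1) % ℓ = if j + 1 < ℓ then j + 1 else 0 := by
    split_ifs with h
    · exact Nat.mod_eq_of_lt h
    · rw [show j + 1 = ℓ by omega, Nat.mod_self]
  rw [cycleColor, cycleColor, Ne, ZMod.natCast_eq_natCast_iff', hsucc, cycleReorder]
  split_ifs <;> simp only [Equiv.swap_apply_def, Equiv.Perm.one_apply] <;> (try split_ifs) <;> omega

lemma card_filter_cycleColor (m ℓ : ℕ) (i : ZMod 3) :
    #{j ∈ range ℓ | cycleColor m ℓ j = i} = Nat.count (fun j ↦ ((m + j : ℕ) : ZMod 3) = i) ℓ := by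
  rw [Nat.count_eq_card_filter_range]
  exact card_equiv (cycleReorder ℓ) fun j ↦ by simp [cycleColor, cycleReorder_lt_iff]

lemma div_le_count_natCast_eq (m n : ℕ) [NeZero m] (i : ZMod m) :
    n / m ≤ Nat.count (fun p ↦ (p : ZMod m) = i) n := by
  have h : (fun p : ℕ ↦ (p : ZMod m) = i) = (· ≡ i.val [MOD m]) := by
    ext p; rw [← ZMod.natCast_eq_natCast_iff, ZMod.natCast_zmod_val]
  simp only [h, Nat.count_modEq_card _ (Nat.pos_of_neZero m)]
  exact Nat.le_add_right _ _

namespace Equiv.Perm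

variable {α : Type*} [DecidableEq α] (π : Equiv.Perm α)

noncomputable def orbitFinset (a : α) : Finset α := (range (minimalPeriod π a)).image (π^[·] a)

lemma card_orbitFinset (a : α) : #(π.orbitFinset a) = minimalPeriod π a := by
  rw [orbitFinset, card_image_of_injOn, card_range]
  simpa [Set.InjOn] using iterate_injOn_Iio_minimalPeriod (f := π) (x := a)

lemma orbitFinset_subset {s : Finset α} (hs : Set.MapsTo π s s) {a : α} (ha : a ∈ s) :
    π.orbitFinset a ⊆ s := by
  simp only [orbitFinset, image_subset_iff]
  exact fun j _ ↦ hs.iterate j ha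

variable [Finite α]

lemma mem_orbitFinset_iff {a x : α} : x ∈ π.orbitFinset a ↔ π.SameCycle a x := by
  have hpos : 0 < minimalPeriod π a :=
    minimalPeriod_pos_of_mem_periodicPts (π.injective.mem_periodicPts a)
  simp only [orbitFinset, mem_image, mem_range]
  constructor
  · rintro ⟨j, -, rfl⟩
    rw [← coe_pow, sameCycle_pow_right]
  · intro h
    obtain ⟨j, rfl⟩ := h.exists_nat_pow_eq
    exact ⟨j % minimalPeriod π a, Nat.mod_lt _ hpos, by rw [iterate_mod_minimalPeriod_eq, coe_pow]⟩

lemma mem_orbitFinset_self (a : α) : a ∈ π.orbitFinset a :=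
  (π.mem_orbitFinset_iff).mpr (SameCycle.refl _ _)

lemma apply_mem_orbitFinset_iff {a x : α} :
    π x ∈ π.orbitFinset a ↔ x ∈ π.orbitFinset a := by
  simp only [mem_orbitFinset_iff, sameCycle_apply_right]

lemma exists_orbit_coloring (hfix : ∀ x, π x ≠ x) (a : α) (m : ℕ) :
    ∃ d : α → ZMod 3, (∀ x ∈ π.orbitFinset a, d (π x) ≠ d x) ∧
      ∀ i, #{x ∈ π.orbitFinset a | d x = i} =
        Nat.count (fun j ↦ ((m + j : ℕ) : ZMod 3) = i) (minimalPeriod π a) := by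
  set ℓ := minimalPeriod π a
  have hinj : Set.InjOn (π^[·] a) (Set.Iio ℓ) := iterate_injOn_Iio_minimalPeriod
  have hℓ : 2 ≤ ℓ := by
    have : 0 < ℓ := minimalPeriod_pos_of_mem_periodicPts (π.injective.mem_periodicPts a)
    have : ℓ ≠ 1 := fun h ↦ hfix a (minimalPeriod_eq_one_iff_isFixedPt.mp h)
    omega
  have hidx : ∀ j < ℓ, invFunOn (π^[·] a) (Set.Iio ℓ) (π^[j] a) = j :=
    fun j hj ↦ hinj.leftInvOn_invFunOn hj
  refine ⟨fun x ↦ cycleColor m ℓ (invFunOn (π^[·] a) (Set.Iio ℓ) x), ?_, fun i ↦ ?_⟩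
  · simp only [orbitFinset, forall_mem_image, mem_range]
    intro j hj
    have hsucc : π (π^[j] a) = π^[(j + 1) % ℓ] a := by
      rw [iterate_mod_minimalPeriod_eq, iterate_succ_apply']
    rw [hsucc, hidx _ (Nat.mod_lt _ (by omega)), hidx j hj]
    exact cycleColor_mod_succ_ne hℓ hj
  · rw [orbitFinset, filter_image, card_image_of_injOn, ← card_filter_cycleColor]
    · exact congrArg card (filter_congr fun j hj ↦ by dsimp only; rw [hidx j (mem_range.mp hj)])
    · exact hinj.mono fun j hj ↦ by simpa using (mem_filter.mp hj).1

lemma exists_coloring_card_eq_count (hfix : ∀ x, π x ≠ x) (s : Finset α)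
    (hs : Set.MapsTo π s s) :
    ∃ c : α → ZMod 3, (∀ x ∈ s, c (π x) ≠ c x) ∧
      ∀ i, #{x ∈ s | c x = i} = Nat.count (fun p ↦ (p : ZMod 3) = i) #s := by
  induction s using Finset.strongInduction with
  | H s ih =>
  obtain rfl | ⟨a, ha⟩ := s.eq_empty_or_nonempty
  · exact ⟨0, by simp, by simp⟩
  set t := π.orbitFinset a
  have hts : t ⊆ s := π.orbitFinset_subset hs ha
  have hrest : Set.MapsTo π ↑(s \ t) ↑(s \ t) := fun x hx ↦ by
    simp only [coe_sdiff, Set.mem_sdiff, mem_coe] at hx ⊢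
    exact ⟨hs hx.1, π.apply_mem_orbitFinset_iff.not.mpr hx.2⟩
  obtain ⟨c', hc'π, hc'card⟩ :=
    ih (s \ t) (sdiff_ssubset hts ⟨a, π.mem_orbitFinset_self a⟩) hrest
  obtain ⟨d, hdπ, hdcard⟩ := π.exists_orbit_coloring hfix a #(s \ t)
  refine ⟨t.piecewise d c', fun x hx ↦ ?_, fun i ↦ ?_⟩
  · by_cases hxt : x ∈ t
    · rw [piecewise_eq_of_mem _ _ _ hxt,
        piecewise_eq_of_mem _ _ _ (π.apply_mem_orbitFinset_iff.mpr hxt)]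
      exact hdπ x hxt
    · rw [piecewise_eq_of_notMem _ _ _ hxt,
        piecewise_eq_of_notMem _ _ _ (π.apply_mem_orbitFinset_iff.not.mpr hxt)]
      exact hc'π x (mem_sdiff.mpr ⟨hx, hxt⟩)
  · calc #{x ∈ s | t.piecewise d c' x = i}
        = #{x ∈ s \ t | c' x = i} + #{x ∈ t | d x = i} := by
          nth_rw 1 [← sdiff_union_of_subset hts]
          rw [filter_union, card_union_of_disjoint (disjoint_filter_filter sdiff_disjoint)]
          congr 2 <;> refine filter_congr fun x hx ↦ ?_
          · rw [piecewise_eq_of_notMem _ _ _ (mem_sdiff.mp hx).2]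
          · rw [piecewise_eq_of_mem _ _ _ hx]
      _ = Nat.count (fun p ↦ (p : ZMod 3) = i) #s := by
          rw [hc'card, hdcard, ← Nat.count_add, ← card_orbitFinset, card_sdiff_add_card_eq_card hts]

end Equiv.Perm

lemma apply_ne_of_incidenceGraph_adj {k : ℕ} {β : Type*} {π : Equiv.Perm (Fin k)}
    {c : Fin k → β} (hc : ∀ x, c (π x) ≠ c x) {i j : Fin k} (h : (incidenceGraph π).Adj i j) :
    c i ≠ c j := by
  obtain ⟨-, rfl | rfl⟩ := h
  exacts [(hc i).symm, hc j]

theorem stmt_2_general (k : ℕ) (π : Equiv.Perm (Fin k))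
    (hfix : ∀ i, π i ≠ i) :
    ∃ V₁ V₂ V₃ : Finset (Fin k),
      Disjoint V₁ V₂ ∧ Disjoint V₁ V₃ ∧ Disjoint V₂ V₃ ∧
      V₁ ∪ V₂ ∪ V₃ = Finset.univ ∧
      (∀ i ∈ V₁, ∀ j ∈ V₁, ¬ (incidenceGraph π).Adj i j) ∧
      (∀ i ∈ V₂, ∀ j ∈ V₂, ¬ (incidenceGraph π).Adj i j) ∧
      (∀ i ∈ V₃, ∀ j ∈ V₃, ¬ (incidenceGraph π).Adj i j) ∧
      k / 3 ≤ V₁.card ∧ k / 3 ≤ V₂.card ∧ k / 3 ≤ V₃.card := by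
  obtain ⟨c, hcπ, hccard⟩ :=
    π.exists_coloring_card_eq_count hfix univ (by simp [Set.mapsTo_univ])
  let V (z : ZMod 3) : Finset (Fin k) := {x | c x = z}
  have hindep (z : ZMod 3) : ∀ i ∈ V z, ∀ j ∈ V z, ¬ (incidenceGraph π).Adj i j :=
    fun i hi j hj hadj ↦ apply_ne_of_incidenceGraph_adj (fun x ↦ hcπ x (mem_univ x)) hadj
      ((mem_filter.mp hi).2.trans (mem_filter.mp hj).2.symm)
  have hcard (z : ZMod 3) : k / 3 ≤ #(V z) := by
    simpa [V, hccard] using div_le_count_natCast_eq 3 k z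
  have hdisj {z w : ZMod 3} (h : z ≠ w) : Disjoint (V z) (V w) :=
    disjoint_filter.mpr fun x _ hz hw ↦ h (hz.symm.trans hw)
  refine ⟨V 0, V 1, V 2, hdisj (by decide), hdisj (by decide), hdisj (by decide), ?_,
    hindep 0, hindep 1, hindep 2, hcard 0, hcard 1, hcard 2⟩
  ext x
  have : ∀ z : ZMod 3, z = 0 ∨ z = 1 ∨ z = 2 := by decide
  simpa [V, or_assoc] using this (c x)

theorem stmt_2 (k : ℕ) (hk : 3 ≤ k) (π : Equiv.Perm (Fin k))
    (hfix : ∀ i, π i ≠ i) :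
    ∃ V₁ V₂ V₃ : Finset (Fin k),
      Disjoint V₁ V₂ ∧ Disjoint V₁ V₃ ∧ Disjoint V₂ V₃ ∧
      V₁ ∪ V₂ ∪ V₃ = Finset.univ ∧
      (∀ i ∈ V₁, ∀ j ∈ V₁, ¬ (incidenceGraph π).Adj i j) ∧
      (∀ i ∈ V₂, ∀ j ∈ V₂, ¬ (incidenceGraph π).Adj i j) ∧
      (∀ i ∈ V₃, ∀ j ∈ V₃, ¬ (incidenceGraph π).Adj i j) ∧
      k / 3 ≤ V₁.card ∧ k / 3 ≤ V₂.card ∧ k / 3 ≤ V₃.card :=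
  stmt_2_general k π hfix
end

section
/- For all s > 1, log(s / log s) + (log s)/s - 1 > (log s)/4. -/
/-! With `t = log s` the claim reads `3t/4 - log t + t e^{-t} - 1 > 0` for `t > 0`. When `e^t < 4`
this follows from `log t ≤ t - 1` and `t e^{-t} > t/4`. Otherwise bound `log t` by its tangent line
at `2`; what remains is `t/4 + t e^{-t} ≥ log 2`, an equality at `t = log 4` propagated by the
monotonicity of `t/4 + t e^{-t}`. The two bounds are tight at different points, so one is strict. -/

open Real

lemma four_mul_sub_one_lt_exp (t : ℝ) : 4 * (t - 1) < exp t := by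
  rcases le_or_gt t 1 with ht | ht
  · nlinarith [exp_pos t]
  · have he : 4 < exp 2 := by
      rw [show (2 : ℝ) = 1 + 1 by norm_num, exp_add]
      nlinarith [exp_one_gt_d9]
    calc 4 * (t - 1) < exp 2 * (t - 1) := by gcongr
      _ ≤ exp 2 * exp (t - 2) := by gcongr; linarith [add_one_le_exp (t - 2)]
      _ = exp t := by rw [← exp_add]; ring_nf

lemma strictMono_div_four_add_mul_exp_neg : StrictMono fun t : ℝ => t / 4 + t * exp (-t) := by
  have hderiv (t : ℝ) :
      HasDerivAt (fun t : ℝ => t / 4 + t * exp (-t)) (1 / 4 + (1 - t) * exp (-t)) t := by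
    have := ((hasDerivAt_id t).div_const 4).add ((hasDerivAt_id t).mul (hasDerivAt_neg t).exp)
    exact this.congr_deriv (by simp only [id]; ring)
  refine strictMono_of_deriv_pos fun t => ?_
  rw [(hderiv t).deriv]
  have h := four_mul_sub_one_lt_exp t
  have hpos : 0 < exp (-t) := exp_pos _
  have hinv : exp t * exp (-t) = 1 := by rw [← exp_add]; simp
  nlinarith

lemma log_lt_half_add_log_two_sub_one {t : ℝ} (ht : 0 < t) (h2 : t ≠ 2) :
    log t < t / 2 + log 2 - 1 := by
  have hlog : log t = log (t / 2) + log 2 := by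
    rw [← log_mul (by positivity) two_ne_zero, div_mul_cancel₀ t two_ne_zero]
  have hhalf : t / 2 ≠ 1 := by
    rwa [Ne, div_eq_one_iff_eq two_ne_zero]
  linarith [log_lt_sub_one_of_pos (by positivity) hhalf]

lemma three_mul_div_four_sub_log_add_mul_exp_neg_sub_one_pos {t : ℝ} (ht : 0 < t) :
    0 < 3 * t / 4 - log t + t * exp (-t) - 1 := by
  rcases lt_or_ge t (log 4) with h4 | h4
  · have hexp : exp t < 4 := (lt_log_iff_exp_lt (by norm_num)).mp h4
    have : t / 4 < t * exp (-t) := by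
      rw [exp_neg, ← div_eq_mul_inv]
      exact div_lt_div_of_pos_left ht (exp_pos t) hexp
    linarith [log_le_sub_one_of_pos ht]
  · have hmono := strictMono_div_four_add_mul_exp_neg
    have hlog4 : log 4 = 2 * log 2 := by
      rw [show (4 : ℝ) = 2 ^ 2 by norm_num, log_pow]; push_cast; ring
    have hbase : log 4 / 4 + log 4 * exp (-log 4) = log 2 := by
      rw [exp_neg, exp_log (by norm_num), hlog4]; ring
    rcases eq_or_ne t 2 with rfl | h2
    · have := hmono (show log 4 < 2 by linarith [log_two_lt_d9])
      simp only [hbase] at this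
      linarith
    · have := hmono.monotone h4
      simp only [hbase] at this
      linarith [log_lt_half_add_log_two_sub_one ht h2]

theorem stmt_3 (s : ℝ) (hs : 1 < s) :
    Real.log (s / Real.log s) + Real.log s / s - 1 > Real.log s / 4 := by
  have hs0 : 0 < s := by linarith
  have hlog : 0 < log s := log_pos hs
  have key := three_mul_div_four_sub_log_add_mul_exp_neg_sub_one_pos hlog
  rw [exp_neg, exp_log hs0, ← div_eq_mul_inv] at key
  rw [log_div hs0.ne' hlog.ne']
  linarith
end

section
/- Given integers b₁, ..., b_d, construct y ∈ ℤ^{2d+1} with y_i = b_i for i ∈ [d] and y_i = 0 otherwise, and let A be the (2d+1)×(2d) integer matrix whose top 2d×2d block is the identity and whose last row is (1,...,1,-1,...,-1) with d ones followed by d minus-ones. Then there exist a permutation π of [2d+1] and a vector x ∈ ℝ^{2d} with y_{π} = A x if and only if there exists a subset S ⊆ [d] with ∑_{i∈S} b_i = ∑_{i∈[d]∖S} b_i. -/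
/-!
The top `2d` rows of `A` force `x` to be the first `2d` entries of `y ∘ π`, so `π` is feasible
exactly when the last row holds, i.e. when `∑ i, ε i * y (π i) = 0` with `ε i = 1` for `i < d`
and `-1` otherwise. As `y` is supported on its first `d` entries, this reads
`∑ k, ε (π⁻¹ k) * b k = 0`: the `b k` that `π` places among the first `d` slots form `S`.
Conversely, any `S` is realised by a permutation whose inverse sends `k` to `k` for `k ∈ S`
and to `k + d` otherwise.
-/

open Finset Matrix

lemma Matrix.exists_mulVec_eq_iff_of_submatrix_castSucc_eq_one {R : Type*} [NonAssocSemiring R]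
    {n : ℕ} (A : Matrix (Fin (n + 1)) (Fin n) R) (hA : A.submatrix Fin.castSucc id = 1)
    (z : Fin (n + 1) → R) :
    (∃ x, A *ᵥ x = z) ↔ z (Fin.last n) = ∑ j, A (Fin.last n) j * z j.castSucc := by
  have htop (x : Fin n → R) (j : Fin n) : (A *ᵥ x) j.castSucc = x j := by
    simpa [hA] using (congrFun (A.submatrix_mulVec_equiv x Fin.castSucc (Equiv.refl _)) j).symm
  constructor
  · rintro ⟨x, rfl⟩
    simp only [htop]
    rfl
  · intro hlast
    exact ⟨z ∘ Fin.castSucc, funext fun i => Fin.lastCases hlast.symm (htop _) i⟩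

lemma sum_ite_mem_one_neg_one_mul {ι R : Type*} [Fintype ι] [DecidableEq ι] [Ring R]
    (S : Finset ι) (b : ι → R) :
    ∑ k, (if k ∈ S then 1 else -1) * b k = ∑ k ∈ S, b k - ∑ k ∈ Sᶜ, b k := by
  simp only [ite_mul, one_mul, neg_one_mul, sum_ite, sum_neg_distrib, ← sub_eq_add_neg]
  congr 2 <;> ext <;> simp

lemma sum_mul_perm_eq_sum_castLE {R : Type*} [NonUnitalNonAssocSemiring R] {m n : ℕ} (h : m ≤ n)
    (b : Fin m → R) (y : Fin n → R) (hy : ∀ i, y i = if hi : (i : ℕ) < m then b ⟨i, hi⟩ else 0)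
    (c : Fin n → R) (π : Equiv.Perm (Fin n)) :
    ∑ i, c i * y (π i) = ∑ k, c (π.symm (Fin.castLE h k)) * b k := by
  symm
  refine Fintype.sum_of_injective _ (π.symm.injective.comp (Fin.castLE_injective h)) _ _
    (fun i hi => ?_) (fun k => ?_)
  · have : ¬ ((π i : ℕ) < m) := fun hlt => hi ⟨⟨π i, hlt⟩, by simp⟩
    simp [hy, this]
  · simp [hy]

lemma exists_perm_castLE_lt_iff {d n : ℕ} (h : 2 * d ≤ n) (S : Finset (Fin d)) :
    ∃ ρ : Equiv.Perm (Fin n), ∀ k, (ρ (Fin.castLE (by omega) k) : ℕ) < d ↔ k ∈ S := by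
  let g : Fin d → Fin n := fun k => if k ∈ S then ⟨k, by omega⟩ else ⟨k + d, by omega⟩
  have hg : Function.Injective g := by
    intro k l hkl
    have := congrArg Fin.val hkl
    simp only [g] at this
    split_ifs at this <;> simp at this <;> ext <;> omega
  obtain ⟨ρ, hρ⟩ := Equiv.Perm.exists_extending_pair _ g (Fin.castLE_injective _) hg
  refine ⟨ρ, fun k => ?_⟩
  rw [hρ]
  by_cases hk : k ∈ S <;> simp [g, hk]

theorem stmt_10_general (d : ℕ) (b : Fin d → ℤ)
    (y : Fin (2 * d + 1) → ℤ)
    (A : Matrix (Fin (2 * d + 1)) (Fin (2 * d)) ℝ)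
    (hy : ∀ i, y i = if h : (i : ℕ) < d then b ⟨i, h⟩ else 0)
    (hA : ∀ i j, A i j =
      if (i : ℕ) < 2 * d then (if (i : ℕ) = (j : ℕ) then 1 else 0)
      else (if (j : ℕ) < d then 1 else -1)) :
    (∃ (π : Equiv.Perm (Fin (2 * d + 1))) (x : Fin (2 * d) → ℝ),
        ∀ i, ((y (π i) : ℝ)) = ∑ j, A i j * x j) ↔
      ∃ S : Finset (Fin d), ∑ i ∈ S, b i = ∑ i ∈ Sᶜ, b i := by
  have hdn : d ≤ 2 * d + 1 := by omega
  have hA_top : A.submatrix Fin.castSucc id = 1 := by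
    ext i j
    simp [hA, Matrix.one_apply, Fin.val_inj]
  have hA_last (j : Fin (2 * d)) :
      A (Fin.last _) j = ((if (j : ℕ) < d then 1 else -1 : ℤ) : ℝ) := by
    simp [hA]
  set ε : Fin (2 * d + 1) → ℤ := fun i => if (i : ℕ) < d then 1 else -1
  have hfeasible (π : Equiv.Perm (Fin (2 * d + 1))) :
      (∃ x : Fin (2 * d) → ℝ, ∀ i, (y (π i) : ℝ) = ∑ j, A i j * x j) ↔
        ∑ k, ε (π.symm (Fin.castLE hdn k)) * b k = 0 := by
    have hsystem : (∃ x : Fin (2 * d) → ℝ, ∀ i, (y (π i) : ℝ) = ∑ j, A i j * x j) ↔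
        ∃ x, A *ᵥ x = fun i => (y (π i) : ℝ) :=
      exists_congr fun x => by simp only [funext_iff, eq_comm]; rfl
    rw [hsystem, A.exists_mulVec_eq_iff_of_submatrix_castSucc_eq_one hA_top,
      ← sum_mul_perm_eq_sum_castLE hdn b y hy ε π, Fin.sum_univ_castSucc]
    have hε_last : ε (Fin.last _) = -1 := if_neg (by simp; omega)
    rw [hε_last, neg_one_mul, ← sub_eq_add_neg, sub_eq_zero, eq_comm]
    simp only [hA_last, ε, Fin.val_castSucc]
    exact_mod_cast Iff.rfl
  simp only [hfeasible]
  constructor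
  · rintro ⟨π, hπ⟩
    refine ⟨({k | (π.symm (Fin.castLE hdn k) : ℕ) < d} : Finset (Fin d)), ?_⟩
    rw [← sub_eq_zero, ← sum_ite_mem_one_neg_one_mul]
    simpa [ε] using hπ
  · rintro ⟨S, hS⟩
    obtain ⟨ρ, hρ⟩ := exists_perm_castLE_lt_iff (n := 2 * d + 1) (by omega) S
    refine ⟨ρ.symm, ?_⟩
    simp only [ε, Equiv.symm_symm, hρ]
    rw [sum_ite_mem_one_neg_one_mul, hS, sub_self]

theorem stmt_10 (d : ℕ) (hd : 1 ≤ d) (b : Fin d → ℤ)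
    (y : Fin (2 * d + 1) → ℤ)
    (A : Matrix (Fin (2 * d + 1)) (Fin (2 * d)) ℝ)
    (hy : ∀ i, y i = if h : (i : ℕ) < d then b ⟨i, h⟩ else 0)
    (hA : ∀ i j, A i j =
      if (i : ℕ) < 2 * d then (if (i : ℕ) = (j : ℕ) then 1 else 0)
      else (if (j : ℕ) < d then 1 else -1)) :
    (∃ (π : Equiv.Perm (Fin (2 * d + 1))) (x : Fin (2 * d) → ℝ),
        ∀ i, ((y (π i) : ℝ)) = ∑ j, A i j * x j) ↔
      ∃ S : Finset (Fin d), ∑ i ∈ S, b i = ∑ i ∈ Sᶜ, b i :=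
  stmt_10_general d b y A hy hA
end

section
/- For n ≥ 2, n! ≤ e·√n·(n/e)^n. -/
/-! The Stirling sequence `n! / (√(2n) (n/e)^n)` is decreasing for `n ≥ 1`, and its value at
`n = 1` is `e / √2`. -/

open Real Nat

theorem Stirling.stirlingSeq_le_exp_one_div_sqrt_two {n : ℕ} (hn : n ≠ 0) :
    Stirling.stirlingSeq n ≤ exp 1 / √2 := by
  obtain ⟨m, rfl⟩ := Nat.exists_eq_succ_of_ne_zero hn
  rw [← Stirling.stirlingSeq_one]
  exact Stirling.stirlingSeq'_antitone (Nat.zero_le m)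

theorem factorial_le_exp_one_mul_sqrt_mul_pow {n : ℕ} (hn : n ≠ 0) :
    (n ! : ℝ) ≤ exp 1 * √n * (n / exp 1) ^ n := by
  have hpos : 0 < √(2 * n) * (n / exp 1) ^ n := by positivity
  have h := Stirling.stirlingSeq_le_exp_one_div_sqrt_two hn
  rw [Stirling.stirlingSeq, div_le_iff₀ hpos] at h
  calc (n ! : ℝ) ≤ exp 1 / √2 * (√(2 * n) * (n / exp 1) ^ n) := h
    _ = exp 1 * √n * (n / exp 1) ^ n := by
      rw [sqrt_mul zero_le_two]
      field_simp

theorem stmt_19 (n : ℕ) (hn : 2 ≤ n) :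
    (Nat.factorial n : ℝ) ≤ Real.exp 1 * Real.sqrt n * ((n : ℝ) / Real.exp 1) ^ n :=
  factorial_le_exp_one_mul_sqrt_mul_pow (by omega)
end
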